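/- arXiv:1512.00405 — 2 statements merged into one kernel-verified Lean document; each statement's English description precedes it below -/
import Mathlib

section
/- Suppose q₂ = λ·q₁^α for constants α ∈ ℝ, λ ≠ 0, with q₁ nowhere zero. Then the relative normalizations satisfy ȳ₂ = λ·q₁^{α−1}·[ȳ₁ + (α−1)·∇^{III}(q₁, ξ̄)] and the Tchebychev fields satisfy T̄₂ = λ·q₁^{α−1}·[T̄₁ − ((α−1)(n+2)/(2n))·∇^{III}(q₁, ξ̄)]. -/
noncomputable def pd {n : ℕ} (f : EuclideanSpace ℝ (Fin n) → ℝ) (i : Fin n)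
    (u : EuclideanSpace ℝ (Fin n)) : ℝ :=
  fderiv ℝ f u (EuclideanSpace.single i 1)

noncomputable def pdv {n m : ℕ}
    (f : EuclideanSpace ℝ (Fin n) → EuclideanSpace ℝ (Fin m)) (i : Fin n)
    (u : EuclideanSpace ℝ (Fin n)) : EuclideanSpace ℝ (Fin m) :=
  fderiv ℝ f u (EuclideanSpace.single i 1)

/-- III-gradient tangent vector `∇^{III}(f, ξ̄) = −h^{ij} f_{/i} x̄_{/j}`. -/
noncomputable def gradIII {n : ℕ}
    (hinv : EuclideanSpace ℝ (Fin n) → Matrix (Fin n) (Fin n) ℝ)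
    (x : EuclideanSpace ℝ (Fin n) → EuclideanSpace ℝ (Fin (n + 1)))
    (f : EuclideanSpace ℝ (Fin n) → ℝ) (u : EuclideanSpace ℝ (Fin n)) :
    EuclideanSpace ℝ (Fin (n + 1)) :=
  -(∑ i, ∑ j, (hinv u i j * pd f i u) • pdv x j u)

/-- Relative normalization `ȳ = ∇^{III}(q, ξ̄) + q ξ̄` of support function `q`. -/
noncomputable def relNor {n : ℕ}
    (hinv : EuclideanSpace ℝ (Fin n) → Matrix (Fin n) (Fin n) ℝ)
    (x ξ : EuclideanSpace ℝ (Fin n) → EuclideanSpace ℝ (Fin (n + 1)))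
    (q : EuclideanSpace ℝ (Fin n) → ℝ) (u : EuclideanSpace ℝ (Fin n)) :
    EuclideanSpace ℝ (Fin (n + 1)) :=
  gradIII hinv x q u + q u • ξ u

/-- Tchebychev field `T̄ = q·T̄_EUK − ((n+2)/(2n))·∇^{III}(q, ξ̄)` of support
function `q`, where `T̄_EUK = (1/(2nK))·∇^{III}(K, ξ̄)`. -/
noncomputable def tcheb {n : ℕ}
    (hinv : EuclideanSpace ℝ (Fin n) → Matrix (Fin n) (Fin n) ℝ)
    (x : EuclideanSpace ℝ (Fin n) → EuclideanSpace ℝ (Fin (n + 1)))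
    (K q : EuclideanSpace ℝ (Fin n) → ℝ) (u : EuclideanSpace ℝ (Fin n)) :
    EuclideanSpace ℝ (Fin (n + 1)) :=
  (q u / (2 * (n : ℝ) * K u)) • gradIII hinv x K u
    - (((n : ℝ) + 2) / (2 * (n : ℝ))) • gradIII hinv x q u

/-! On `U` we have `q₂ = φ ∘ q₁` with `φ t = λ |t| ^ α`, so the chain rule gives
`∇^{III} q₂ = φ'(q₁) ∇^{III} q₁ = α c ∇^{III} q₁` with `c = λ |q₁| ^ α / q₁`, while `q₂ = c q₁`
because `q₁ ≠ 0`. Both identities are then linear in `∇^{III} q₁` with scalar coefficients. -/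

open Filter Topology

theorem hasDerivAt_abs_rpow_of_ne_zero (α : ℝ) {t : ℝ} (ht : t ≠ 0) :
    HasDerivAt (fun s : ℝ => |s| ^ α) (α * |t| ^ α / t) t := by
  have habs : |t| ≠ 0 := abs_ne_zero.mpr ht
  refine ((Real.hasDerivAt_rpow_const (Or.inl habs)).comp t (hasDerivAt_abs ht)).congr_deriv ?_
  rw [Real.rpow_sub_one habs]
  field_simp
  rw [mul_assoc, sign_mul_self]

section gradIII

variable {n : ℕ} (hinv : EuclideanSpace ℝ (Fin n) → Matrix (Fin n) (Fin n) ℝ)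
  (x : EuclideanSpace ℝ (Fin n) → EuclideanSpace ℝ (Fin (n + 1)))
  {f g : EuclideanSpace ℝ (Fin n) → ℝ} {u : EuclideanSpace ℝ (Fin n)}

theorem gradIII_congr_of_eventuallyEq (h : f =ᶠ[𝓝 u] g) :
    gradIII hinv x f u = gradIII hinv x g u := by
  simp only [gradIII, pd, h.fderiv_eq]

theorem gradIII_comp {φ : ℝ → ℝ} {φ' : ℝ} (hφ : HasDerivAt φ φ' (f u))
    (hf : DifferentiableAt ℝ f u) :
    gradIII hinv x (φ ∘ f) u = φ' • gradIII hinv x f u := by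
  have hpd : ∀ i, pd (φ ∘ f) i u = φ' * pd f i u := fun i => by
    simp [pd, (hφ.comp_hasFDerivAt u hf.hasFDerivAt).fderiv]
  simp only [gradIII, hpd, smul_neg, Finset.smul_sum, smul_smul, mul_left_comm]

end gradIII

section scaling

variable {n : ℕ} (hinv : EuclideanSpace ℝ (Fin n) → Matrix (Fin n) (Fin n) ℝ)
  (x ξ : EuclideanSpace ℝ (Fin n) → EuclideanSpace ℝ (Fin (n + 1)))
  {K q₁ q₂ : EuclideanSpace ℝ (Fin n) → ℝ} {u : EuclideanSpace ℝ (Fin n)} {c α : ℝ}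

theorem relNor_eq_smul_of_gradIII_eq (hq : q₂ u = c * q₁ u)
    (hgrad : gradIII hinv x q₂ u = (α * c) • gradIII hinv x q₁ u) :
    relNor hinv x ξ q₂ u = c • (relNor hinv x ξ q₁ u + (α - 1) • gradIII hinv x q₁ u) := by
  rw [relNor, relNor, hgrad, hq]
  module

theorem tcheb_eq_smul_of_gradIII_eq (hq : q₂ u = c * q₁ u)
    (hgrad : gradIII hinv x q₂ u = (α * c) • gradIII hinv x q₁ u) :
    tcheb hinv x K q₂ u = c • (tcheb hinv x K q₁ u
      - ((α - 1) * ((n : ℝ) + 2) / (2 * (n : ℝ))) • gradIII hinv x q₁ u) := by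
  rw [tcheb, tcheb, hgrad, hq]
  match_scalars <;> ring

end scaling

theorem power_related_normalizations_general {n : ℕ}
    (U : Set (EuclideanSpace ℝ (Fin n))) (hUo : IsOpen U)
    (x ξ : EuclideanSpace ℝ (Fin n) → EuclideanSpace ℝ (Fin (n + 1)))
    (hinv : EuclideanSpace ℝ (Fin n) → Matrix (Fin n) (Fin n) ℝ)
    (K q₁ q₂ : EuclideanSpace ℝ (Fin n) → ℝ)
    (hq₁ : ContDiffOn ℝ 1 q₁ U) (hq₁0 : ∀ u ∈ U, q₁ u ≠ 0)
    (l α : ℝ)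
    (hq₂ : ∀ u ∈ U, q₂ u = l * |q₁ u| ^ α) :
    ∀ u ∈ U,
      relNor hinv x ξ q₂ u = (l * |q₁ u| ^ α / q₁ u) •
        (relNor hinv x ξ q₁ u + (α - 1) • gradIII hinv x q₁ u) ∧
      tcheb hinv x K q₂ u = (l * |q₁ u| ^ α / q₁ u) •
        (tcheb hinv x K q₁ u
          - ((α - 1) * ((n : ℝ) + 2) / (2 * (n : ℝ))) • gradIII hinv x q₁ u) := by
  intro u hu
  have hU : U ∈ 𝓝 u := hUo.mem_nhds hu
  have hq₁u := hq₁0 u hu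
  have hvalue : q₂ u = l * |q₁ u| ^ α / q₁ u * q₁ u := by
    rw [hq₂ u hu, div_mul_cancel₀ _ hq₁u]
  have hgrad : gradIII hinv x q₂ u = (α * (l * |q₁ u| ^ α / q₁ u)) • gradIII hinv x q₁ u := by
    have hq₂_eq : q₂ =ᶠ[𝓝 u] (fun t => l * |t| ^ α) ∘ q₁ :=
      eventually_of_mem hU hq₂
    rw [gradIII_congr_of_eventuallyEq hinv x hq₂_eq,
      gradIII_comp hinv x ((hasDerivAt_abs_rpow_of_ne_zero α hq₁u).const_mul l)
        ((hq₁.contDiffAt hU).differentiableAt one_ne_zero)]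
    congr 1
    ring
  exact ⟨relNor_eq_smul_of_gradIII_eq hinv x ξ hvalue hgrad,
    tcheb_eq_smul_of_gradIII_eq hinv x hvalue hgrad⟩

/-- if `q₂ = λ·q₁^α` (sign-consistent power `λ·|q₁|^α`) with
`λ ≠ 0` and `q₁` nowhere zero, then
`ȳ₂ = λ·q₁^{α−1}·[ȳ₁ + (α−1)·∇^{III}(q₁, ξ̄)]` and
`T̄₂ = λ·q₁^{α−1}·[T̄₁ − ((α−1)(n+2)/(2n))·∇^{III}(q₁, ξ̄)]`, where
`λ·q₁^{α−1} = λ·|q₁|^α / q₁`. -/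
theorem power_related_normalizations {n : ℕ} (hn : 0 < n)
    (U : Set (EuclideanSpace ℝ (Fin n))) (hUo : IsOpen U)
    (x ξ : EuclideanSpace ℝ (Fin n) → EuclideanSpace ℝ (Fin (n + 1)))
    (hinv : EuclideanSpace ℝ (Fin n) → Matrix (Fin n) (Fin n) ℝ)
    (K q₁ q₂ : EuclideanSpace ℝ (Fin n) → ℝ)
    (hK : ContDiffOn ℝ 1 K U) (hK0 : ∀ u ∈ U, K u ≠ 0)
    (hq₁ : ContDiffOn ℝ 1 q₁ U) (hq₁0 : ∀ u ∈ U, q₁ u ≠ 0)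
    (l α : ℝ) (hl : l ≠ 0)
    (hq₂ : ∀ u ∈ U, q₂ u = l * |q₁ u| ^ α) :
    ∀ u ∈ U,
      relNor hinv x ξ q₂ u = (l * |q₁ u| ^ α / q₁ u) •
        (relNor hinv x ξ q₁ u + (α - 1) • gradIII hinv x q₁ u) ∧
      tcheb hinv x K q₂ u = (l * |q₁ u| ^ α / q₁ u) •
        (tcheb hinv x K q₁ u
          - ((α - 1) * ((n : ℝ) + 2) / (2 * (n : ℝ))) • gradIII hinv x q₁ u) :=
  power_related_normalizations_general U hUo x ξ hinv K q₁ q₂ hq₁ hq₁0 l α hq₂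
end

section
/- If the Tchebychev fields of two relative normalizations satisfy T̄₂ = α·T̄₁ for a constant α, then the relative mean curvatures satisfy H₂ = α·H₁ + μ·H_AFF for some constant μ, where H_AFF is the equiaffine mean curvature. -/
open scoped RealInnerProductSpace

/-!
The Tchebychev field is the III-gradient of the covector `(q/(2nK)) dK − ((n+2)/(2n)) dq`, and
the III-gradient is injective on covectors (the `x̄_{/j}` are independent and `(h^{ij})` is
invertible). Hence `T̄₂ = α T̄₁` says that `g = q₂ − α q₁` solves `(n+2) dg = (g/K) dK`, so
`g |K|^{-1/(n+2)}` is locally constant and `q₂ = α q₁ + μ |K|^{1/(n+2)}` on the connected set `U`.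
The relative normalization, and through the independence of the `x̄_{/j}` also its shape
operator, depend linearly on the support function, so `B₂ = α B₁ + μ B_AFF`; take traces.
-/

open Matrix Set

theorem HasFDerivAt.abs_rpow_const {E : Type*} [NormedAddCommGroup E] [NormedSpace ℝ E]
    {K : E → ℝ} {K' : E →L[ℝ] ℝ} {u : E} (hK : HasFDerivAt K K' u) (hK0 : K u ≠ 0) (c : ℝ) :
    HasFDerivAt (fun v => |K v| ^ c) ((c * |K u| ^ c / K u) • K') u := by
  convert (hK.abs hK0).rpow_const (p := c) (Or.inl (abs_ne_zero.2 hK0)) using 1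
  rw [smul_smul, Real.rpow_sub_one (abs_ne_zero.2 hK0)]
  congr 1
  rcases hK0.lt_or_gt with h | h
  · simp only [_root_.abs_of_neg h, h, sign_neg, SignType.coe_neg, SignType.coe_one]; ring
  · simp only [_root_.abs_of_pos h, h, sign_pos, SignType.coe_one]; ring

theorem IsOpen.exists_eqOn_mul_abs_rpow_of_fderiv_eq {E : Type*} [NormedAddCommGroup E]
    [NormedSpace ℝ E] {U : Set E} (hUo : IsOpen U) (hUc : IsPreconnected U) {g K : E → ℝ}
    {c : ℝ} (hg : DifferentiableOn ℝ g U) (hK : DifferentiableOn ℝ K U) (hK0 : ∀ u ∈ U, K u ≠ 0)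
    (hgK : ∀ u ∈ U, fderiv ℝ g u = (c * g u / K u) • fderiv ℝ K u) :
    ∃ μ : ℝ, EqOn g (fun u => μ * |K u| ^ c) U := by
  have hderiv : ∀ u ∈ U, HasFDerivAt (fun v => g v * |K v| ^ (-c)) (0 : E →L[ℝ] ℝ) u := by
    intro u hu
    have hgu := (hg.differentiableAt (hUo.mem_nhds hu)).hasFDerivAt
    have hKu := (hK.differentiableAt (hUo.mem_nhds hu)).hasFDerivAt.abs_rpow_const (hK0 u hu) (-c)
    refine (hgu.mul hKu).congr_fderiv ?_
    rw [hgK u hu, smul_smul, smul_smul, ← add_smul]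
    convert zero_smul ℝ (fderiv ℝ K u) using 2
    ring
  obtain ⟨μ, hμ⟩ := hUo.exists_is_const_of_fderiv_eq_zero hUc
    (fun u hu => (hderiv u hu).differentiableAt.differentiableWithinAt)
    (fun u hu => (hderiv u hu).fderiv)
  refine ⟨μ, fun u hu => ?_⟩
  have hpos : 0 < |K u| := abs_pos.2 (hK0 u hu)
  dsimp only
  rw [← hμ u hu, mul_assoc, ← Real.rpow_add hpos, neg_add_cancel, Real.rpow_zero, mul_one]

noncomputable def tchebForm {n : ℕ} (K q : EuclideanSpace ℝ (Fin n) → ℝ)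
    (u : EuclideanSpace ℝ (Fin n)) : EuclideanSpace ℝ (Fin n) →L[ℝ] ℝ :=
  (q u / (2 * (n : ℝ) * K u)) • fderiv ℝ K u - (((n : ℝ) + 2) / (2 * (n : ℝ))) • fderiv ℝ q u

section GradIII

variable {n : ℕ} (hinv : EuclideanSpace ℝ (Fin n) → Matrix (Fin n) (Fin n) ℝ)
  (x : EuclideanSpace ℝ (Fin n) → EuclideanSpace ℝ (Fin (n + 1))) (u : EuclideanSpace ℝ (Fin n))

/-- `∇^{III}(·, ξ̄)` at `u` on covectors: `ω ↦ −h^{ij} ω(e_i) x̄_{/j}`. -/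
noncomputable def gradIIILin :
    (EuclideanSpace ℝ (Fin n) →L[ℝ] ℝ) →ₗ[ℝ] EuclideanSpace ℝ (Fin (n + 1)) :=
  -(Fintype.linearCombination ℝ (fun j => pdv x j u) ∘ₗ (hinv u).vecMulLinear ∘ₗ
    LinearMap.pi fun i =>
      (ContinuousLinearMap.apply ℝ ℝ (EuclideanSpace.single i (1 : ℝ))).toLinearMap)

theorem gradIII_eq_gradIIILin (f : EuclideanSpace ℝ (Fin n) → ℝ) :
    gradIII hinv x f u = gradIIILin hinv x u (fderiv ℝ f u) := by
  simp only [gradIII, pd, gradIIILin, LinearMap.neg_apply, LinearMap.coe_comp,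
    Function.comp_apply, LinearMap.flip_apply, vecMulBilin_apply, Fintype.linearCombination_apply,
    vecMul, dotProduct, LinearMap.pi_apply, ContinuousLinearMap.coe_coe,
    ContinuousLinearMap.apply_apply, mul_comm, Finset.sum_smul, neg_inj]
  exact Finset.sum_comm

theorem gradIIILin_injective {h : Matrix (Fin n) (Fin n) ℝ}
    (hind : LinearIndependent ℝ fun j => pdv x j u) (hhinv : h * hinv u = 1) :
    Function.Injective (gradIIILin hinv x u) := by
  have hvecMul : Function.Injective (hinv u).vecMulLinear := fun a b hab => by
    simpa [vecMul_vecMul, mul_eq_one_comm.mp hhinv] using congrArg (vecMul · h) hab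
  have heval : Function.Injective (LinearMap.pi fun i =>
      (ContinuousLinearMap.apply ℝ ℝ (EuclideanSpace.single i (1 : ℝ))).toLinearMap) :=
    fun L L' hLL' => ContinuousLinearMap.coe_injective <|
      (EuclideanSpace.basisFun (Fin n) ℝ).toBasis.ext fun i => by simpa using congrFun hLL' i
  exact neg_injective.comp <| hind.fintypeLinearCombination_injective.comp <| hvecMul.comp heval

theorem tcheb_eq_gradIIILin (K q : EuclideanSpace ℝ (Fin n) → ℝ) :
    tcheb hinv x K q u = gradIIILin hinv x u (tchebForm K q u) := by
  simp only [tcheb, tchebForm, gradIII_eq_gradIIILin, map_sub, map_smul]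

end GradIII

theorem fderiv_sub_smul_eq_of_tcheb_eq {n : ℕ} (hn : 0 < n)
    {hinv : EuclideanSpace ℝ (Fin n) → Matrix (Fin n) (Fin n) ℝ}
    {x : EuclideanSpace ℝ (Fin n) → EuclideanSpace ℝ (Fin (n + 1))}
    {K q₁ q₂ : EuclideanSpace ℝ (Fin n) → ℝ} {u : EuclideanSpace ℝ (Fin n)}
    {h : Matrix (Fin n) (Fin n) ℝ} (hind : LinearIndependent ℝ fun j => pdv x j u)
    (hhinv : h * hinv u = 1) (hK0 : K u ≠ 0) {α : ℝ}
    (hT : tcheb hinv x K q₂ u = α • tcheb hinv x K q₁ u) :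
    fderiv ℝ q₂ u - α • fderiv ℝ q₁ u
      = ((1 / ((n : ℝ) + 2)) * (q₂ u - α * q₁ u) / K u) • fderiv ℝ K u := by
  have hform : tchebForm K q₂ u = α • tchebForm K q₁ u :=
    gradIIILin_injective hinv x u hind hhinv <| by
      rwa [map_smul, ← tcheb_eq_gradIIILin, ← tcheb_eq_gradIIILin]
  unfold tchebForm at hform
  have hn' : (n : ℝ) ≠ 0 := by positivity
  linear_combination (norm := match_scalars <;> field_simp <;> ring)
    (-(2 * (n : ℝ) / ((n : ℝ) + 2))) • hform

theorem Set.EqOn.fderiv_eq_smul_add_smul {E F : Type*} [NormedAddCommGroup E] [NormedSpace ℝ E]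
    [NormedAddCommGroup F] [NormedSpace ℝ F] {U : Set E} {f g k : E → F} {a b : ℝ}
    (hfgk : EqOn f (a • g + b • k) U) (hUo : IsOpen U) {u : E} (hu : u ∈ U)
    (hg : DifferentiableAt ℝ g u) (hk : DifferentiableAt ℝ k u) :
    fderiv ℝ f u = a • fderiv ℝ g u + b • fderiv ℝ k u := by
  rw [(hfgk.eventuallyEq_of_mem (hUo.mem_nhds hu)).fderiv_eq,
    fderiv_add (hg.const_smul a) (hk.const_smul b), fderiv_const_smul hg, fderiv_const_smul hk]

theorem Set.EqOn.relNor_eq_smul_add_smul {n : ℕ}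
    {hinv : EuclideanSpace ℝ (Fin n) → Matrix (Fin n) (Fin n) ℝ}
    {x ξ : EuclideanSpace ℝ (Fin n) → EuclideanSpace ℝ (Fin (n + 1))}
    {U : Set (EuclideanSpace ℝ (Fin n))} {q f g : EuclideanSpace ℝ (Fin n) → ℝ} {a b : ℝ}
    (hq : EqOn q (a • f + b • g) U) (hUo : IsOpen U) (hf : DifferentiableOn ℝ f U)
    (hg : DifferentiableOn ℝ g U) :
    EqOn (relNor hinv x ξ q) (a • relNor hinv x ξ f + b • relNor hinv x ξ g) U := by
  intro u hu
  have hd := hq.fderiv_eq_smul_add_smul hUo hu (hf.differentiableAt (hUo.mem_nhds hu))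
    (hg.differentiableAt (hUo.mem_nhds hu))
  simp only [relNor, gradIII_eq_gradIIILin, hd, hq hu, map_add, map_smul, Pi.add_apply,
    Pi.smul_apply, smul_eq_mul]
  module

theorem shapeOperator_eq_smul_add_smul {n m : ℕ}
    {x : EuclideanSpace ℝ (Fin n) → EuclideanSpace ℝ (Fin m)} {u : EuclideanSpace ℝ (Fin n)}
    (hind : LinearIndependent ℝ fun j => pdv x j u)
    {y₁ y₂ y₃ : EuclideanSpace ℝ (Fin n) → EuclideanSpace ℝ (Fin m)}
    {B₁ B₂ B₃ : Matrix (Fin n) (Fin n) ℝ} {a b : ℝ}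
    (hB₁ : ∀ i, pdv y₁ i u = -(∑ j, B₁ i j • pdv x j u))
    (hB₂ : ∀ i, pdv y₂ i u = -(∑ j, B₂ i j • pdv x j u))
    (hB₃ : ∀ i, pdv y₃ i u = -(∑ j, B₃ i j • pdv x j u))
    (hy : fderiv ℝ y₁ u = a • fderiv ℝ y₂ u + b • fderiv ℝ y₃ u) :
    B₁ = a • B₂ + b • B₃ := by
  ext i j
  refine hind.eq_coords_of_eq ?_ j
  have hrow : pdv y₁ i u = a • pdv y₂ i u + b • pdv y₃ i u := by simp [pdv, hy]
  rw [hB₁, hB₂, hB₃, ← neg_inj] at hrow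
  simpa [add_smul, Finset.sum_add_distrib, Finset.smul_sum, smul_smul, add_comm] using hrow

theorem mean_curvature_relation_of_tchebychev_proportional_general {n : ℕ} (hn : 0 < n)
    (U : Set (EuclideanSpace ℝ (Fin n))) (hUo : IsOpen U) (hUc : IsConnected U)
    (x ξ : EuclideanSpace ℝ (Fin n) → EuclideanSpace ℝ (Fin (n + 1)))
    (hinv h : EuclideanSpace ℝ (Fin n) → Matrix (Fin n) (Fin n) ℝ)
    (K q₁ q₂ : EuclideanSpace ℝ (Fin n) → ℝ)
    (hind : ∀ u ∈ U, LinearIndependent ℝ (fun j : Fin n => pdv x j u))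
    (hhinv : ∀ u ∈ U, h u * hinv u = 1)
    (hK : ContDiffOn ℝ 1 K U) (hK0 : ∀ u ∈ U, K u ≠ 0)
    (hq₁ : ContDiffOn ℝ 1 q₁ U)
    (hq₂ : ContDiffOn ℝ 1 q₂ U)
    (α : ℝ)
    (hT : ∀ u ∈ U, tcheb hinv x K q₂ u = α • tcheb hinv x K q₁ u)
    -- the relative shape operators `B₁, B₂, B_AFF` of `ȳ₁`, `ȳ₂`, `ȳ_AFF`:
    (B₁ B₂ BA : EuclideanSpace ℝ (Fin n) → Matrix (Fin n) (Fin n) ℝ)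
    (hd₁ : DifferentiableOn ℝ (relNor hinv x ξ q₁) U)
    (hdA : DifferentiableOn ℝ
      (relNor hinv x ξ (fun v => |K v| ^ (1 / ((n : ℝ) + 2)))) U)
    (hB₁ : ∀ u ∈ U, ∀ i, pdv (relNor hinv x ξ q₁) i u
      = -(∑ j, B₁ u i j • pdv x j u))
    (hB₂ : ∀ u ∈ U, ∀ i, pdv (relNor hinv x ξ q₂) i u
      = -(∑ j, B₂ u i j • pdv x j u))
    (hBA : ∀ u ∈ U, ∀ i,
      pdv (relNor hinv x ξ (fun v => |K v| ^ (1 / ((n : ℝ) + 2)))) i u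
        = -(∑ j, BA u i j • pdv x j u)) :
    ∃ μ : ℝ, ∀ u ∈ U,
      (1 / (n : ℝ)) * (B₂ u).trace
        = α * ((1 / (n : ℝ)) * (B₁ u).trace)
          + μ * ((1 / (n : ℝ)) * (BA u).trace) := by
  have hK' := hK.differentiableOn one_ne_zero
  have hq₁' := hq₁.differentiableOn one_ne_zero
  have hq₂' := hq₂.differentiableOn one_ne_zero
  obtain ⟨μ, hμ⟩ := hUo.exists_eqOn_mul_abs_rpow_of_fderiv_eq hUc.isPreconnected
    (g := fun v => q₂ v - α * q₁ v) (hq₂'.sub (hq₁'.const_mul α)) hK' hK0 fun u hu => by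
      have hq₁u := hq₁'.differentiableAt (hUo.mem_nhds hu)
      rw [fderiv_fun_sub (hq₂'.differentiableAt (hUo.mem_nhds hu)) (hq₁u.const_mul α),
        fderiv_const_mul hq₁u]
      exact fderiv_sub_smul_eq_of_tcheb_eq hn (hind u hu) (hhinv u hu) (hK0 u hu) (hT u hu)
  have hq : EqOn q₂ (α • q₁ + μ • fun v => |K v| ^ (1 / ((n : ℝ) + 2))) U := fun u hu => by
    simpa [sub_eq_iff_eq_add'] using hμ hu
  have hqA : DifferentiableOn ℝ (fun v => |K v| ^ (1 / ((n : ℝ) + 2))) U := fun u hu =>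
    ((hK'.differentiableAt (hUo.mem_nhds hu)).hasFDerivAt.abs_rpow_const (hK0 u hu)
      _).differentiableAt.differentiableWithinAt
  have hy := hq.relNor_eq_smul_add_smul (hinv := hinv) (x := x) (ξ := ξ) hUo hq₁' hqA
  refine ⟨μ, fun u hu => ?_⟩
  have hB := shapeOperator_eq_smul_add_smul (hind u hu) (hB₂ u hu) (hB₁ u hu) (hBA u hu) <|
    hy.fderiv_eq_smul_add_smul hUo hu (hd₁.differentiableAt (hUo.mem_nhds hu))
      (hdA.differentiableAt (hUo.mem_nhds hu))
  rw [hB, trace_add, trace_smul, trace_smul, smul_eq_mul, smul_eq_mul]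
  ring

/-- if the Tchebychev fields of two relative normalizations
satisfy `T̄₂ = α·T̄₁` for a constant `α`, then the relative mean curvatures
`Hᵢ = (1/n)·(Bᵢ)ᵢᵢ` (with `ȳᵢ_{/i} = −(Bᵢ)ᵢʲ x̄_{/j}`) satisfy
`H₂ = α·H₁ + μ·H_AFF` for some constant `μ`, where `H_AFF` is the equiaffine
mean curvature. -/
theorem mean_curvature_relation_of_tchebychev_proportional {n : ℕ} (hn : 0 < n)
    (U : Set (EuclideanSpace ℝ (Fin n))) (hUo : IsOpen U) (hUc : IsConnected U)
    (x ξ : EuclideanSpace ℝ (Fin n) → EuclideanSpace ℝ (Fin (n + 1)))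
    (hinv h : EuclideanSpace ℝ (Fin n) → Matrix (Fin n) (Fin n) ℝ)
    (K q₁ q₂ : EuclideanSpace ℝ (Fin n) → ℝ)
    (hind : ∀ u ∈ U, LinearIndependent ℝ (fun j : Fin n => pdv x j u))
    (hξo : ∀ u ∈ U, ∀ i, ⟪ξ u, pdv x i u⟫ = 0)
    (hξn : ∀ u ∈ U, ‖ξ u‖ = 1)
    (hhinv : ∀ u ∈ U, h u * hinv u = 1)
    (hK : ContDiffOn ℝ 1 K U) (hK0 : ∀ u ∈ U, K u ≠ 0)
    (hq₁ : ContDiffOn ℝ 1 q₁ U) (hq₁0 : ∀ u ∈ U, q₁ u ≠ 0)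
    (hq₂ : ContDiffOn ℝ 1 q₂ U) (hq₂0 : ∀ u ∈ U, q₂ u ≠ 0)
    (α : ℝ)
    (hT : ∀ u ∈ U, tcheb hinv x K q₂ u = α • tcheb hinv x K q₁ u)
    -- the relative shape operators `B₁, B₂, B_AFF` of `ȳ₁`, `ȳ₂`, `ȳ_AFF`:
    (B₁ B₂ BA : EuclideanSpace ℝ (Fin n) → Matrix (Fin n) (Fin n) ℝ)
    (hd₁ : DifferentiableOn ℝ (relNor hinv x ξ q₁) U)
    (hd₂ : DifferentiableOn ℝ (relNor hinv x ξ q₂) U)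
    (hdA : DifferentiableOn ℝ
      (relNor hinv x ξ (fun v => |K v| ^ (1 / ((n : ℝ) + 2)))) U)
    (hB₁ : ∀ u ∈ U, ∀ i, pdv (relNor hinv x ξ q₁) i u
      = -(∑ j, B₁ u i j • pdv x j u))
    (hB₂ : ∀ u ∈ U, ∀ i, pdv (relNor hinv x ξ q₂) i u
      = -(∑ j, B₂ u i j • pdv x j u))
    (hBA : ∀ u ∈ U, ∀ i,
      pdv (relNor hinv x ξ (fun v => |K v| ^ (1 / ((n : ℝ) + 2)))) i u
        = -(∑ j, BA u i j • pdv x j u)) :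
    ∃ μ : ℝ, ∀ u ∈ U,
      (1 / (n : ℝ)) * (B₂ u).trace
        = α * ((1 / (n : ℝ)) * (B₁ u).trace)
          + μ * ((1 / (n : ℝ)) * (BA u).trace) :=
  mean_curvature_relation_of_tchebychev_proportional_general hn U hUo hUc x ξ hinv h K q₁ q₂ hind
    hhinv hK hK0 hq₁ hq₂ α hT B₁ B₂ BA hd₁ hdA hB₁ hB₂ hBA
end
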